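/- Let μ and ν be nonzero finite Borel measures on ℝ with compact support, x₋ = inf(supp μ), y₋ = inf(supp ν), z₋ = x₋ + y₋. Suppose the pointwise dimensions D_p(x₋; μ) = d₁ and D_p(y₋; ν) = d₂ exist as finite limits. Then the pointwise dimension of μ ∗ ν at z₋ exists and D_p(z₋; μ ∗ ν) = d₁ + d₂. (Lemma 2: pointwise dimension of the convolution at the left boundary of its support.) -/

import Mathlib

open MeasureTheory Topology Filter

/-- Convolution of two Borel measures on ℝ: pushforward of the product measure
under the addition map. -/
noncomputable def mconv (μ ν : Measure ℝ) : Measure ℝ :=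
  (μ.prod ν).map (fun p : ℝ × ℝ => p.1 + p.2)

/-- Topological support of a Borel measure on ℝ: the (closed) set of points all of
whose neighbourhoods have positive measure. -/
def msupp (μ : Measure ℝ) : Set ℝ := {x : ℝ | ∀ ε > 0, 0 < μ (Metric.ball x ε)}

lemma msupp_compl_null (μ : Measure ℝ) : μ (msupp μ)ᶜ = 0 := by
  apply measure_null_of_locally_null
  intro x hx
  simp only [msupp, Set.mem_compl_iff, Set.mem_setOf_eq] at hx
  push_neg at hx
  simp only [not_lt, nonpos_iff_eq_zero] at hx
  obtain ⟨ε, hε, h0⟩ := hx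
  exact ⟨Metric.ball x ε, mem_nhdsWithin_of_mem_nhds (Metric.ball_mem_nhds x hε),
    h0⟩

lemma msupp_nonempty (μ : Measure ℝ) (h : μ ≠ 0) : (msupp μ).Nonempty := by
  by_contra he
  rw [Set.not_nonempty_iff_eq_empty] at he
  have h2 := msupp_compl_null μ
  rw [he, Set.compl_empty] at h2
  exact h (Measure.measure_univ_eq_zero.mp h2)


/-- Lemma 2: the pointwise dimension of the convolution at the left boundary of its
support is the sum of the pointwise dimensions of the factors at the left boundaries
of their supports. -/
theorem pointwise_dim_convolution_left_boundary
    (μ ν : Measure ℝ) [IsFiniteMeasure μ] [IsFiniteMeasure ν]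
    (hμ0 : μ ≠ 0) (hν0 : ν ≠ 0)
    (hμc : IsCompact (msupp μ)) (hνc : IsCompact (msupp ν))
    (d₁ d₂ : ℝ)
    (hμ : Tendsto (fun ε : ℝ =>
        Real.log ((μ (Metric.ball (sInf (msupp μ)) ε)).toReal) / Real.log ε)
      (𝓝[>] 0) (𝓝 d₁))
    (hν : Tendsto (fun ε : ℝ =>
        Real.log ((ν (Metric.ball (sInf (msupp ν)) ε)).toReal) / Real.log ε)
      (𝓝[>] 0) (𝓝 d₂)) :
    Tendsto (fun ε : ℝ =>
        Real.log ((mconv μ ν (Metric.ball (sInf (msupp μ) + sInf (msupp ν)) ε)).toReal) /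
          Real.log ε)
      (𝓝[>] 0) (𝓝 (d₁ + d₂)) := by
  set x₀ := sInf (msupp μ) with hx₀
  set y₀ := sInf (msupp ν) with hy₀
  have hμmem : x₀ ∈ msupp μ := hμc.isClosed.csInf_mem (msupp_nonempty μ hμ0) hμc.bddBelow
  have hνmem : y₀ ∈ msupp ν := hνc.isClosed.csInf_mem (msupp_nonempty ν hν0) hνc.bddBelow
  have hμIio : μ (Set.Iio x₀) = 0 := by
    refine measure_mono_null ?_ (msupp_compl_null μ)
    intro y hy hmem
    exact absurd (csInf_le hμc.bddBelow hmem) (not_le.mpr hy)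
  have hνIio : ν (Set.Iio y₀) = 0 := by
    refine measure_mono_null ?_ (msupp_compl_null ν)
    intro y hy hmem
    exact absurd (csInf_le hνc.bddBelow hmem) (not_le.mpr hy)
  have hadd : Measurable (fun p : ℝ × ℝ => p.1 + p.2) := measurable_fst.add measurable_snd
  have hconv : ∀ s : Set ℝ, MeasurableSet s →
      mconv μ ν s = (μ.prod ν) ((fun p : ℝ × ℝ => p.1 + p.2) ⁻¹' s) :=
    fun s hs => Measure.map_apply hadd hs
  -- the key measure bounds
  have key : ∀ ε : ℝ, 0 < ε →
      μ (Metric.ball x₀ (ε/2)) * ν (Metric.ball y₀ (ε/2)) ≤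
        mconv μ ν (Metric.ball (x₀ + y₀) ε) ∧
      mconv μ ν (Metric.ball (x₀ + y₀) ε) ≤ μ (Metric.ball x₀ ε) * ν (Metric.ball y₀ ε) := by
    intro ε hε
    rw [hconv _ measurableSet_ball]
    constructor
    · rw [← Measure.prod_prod]
      apply measure_mono
      rintro ⟨x, y⟩ ⟨hx, hy⟩
      simp only [Metric.mem_ball, Real.dist_eq, Set.mem_preimage] at *
      have h1 : |x + y - (x₀ + y₀)| ≤ |x - x₀| + |y - y₀| := by
        calc |x + y - (x₀ + y₀)| = |(x - x₀) + (y - y₀)| := by ring_nf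
          _ ≤ |x - x₀| + |y - y₀| := abs_add_le _ _
      linarith
    · have hS : (μ.prod ν) (Set.Ici x₀ ×ˢ Set.Ici y₀)ᶜ = 0 := by
        refine measure_mono_null (t :=
          (Set.Iio x₀ ×ˢ (Set.univ : Set ℝ)) ∪ ((Set.univ : Set ℝ) ×ˢ Set.Iio y₀)) ?_ ?_
        · rintro ⟨x, y⟩ hxy
          simp only [Set.mem_compl_iff, Set.mem_prod, Set.mem_Ici, not_and_or, not_le,
            Set.mem_union, Set.mem_Iio, Set.mem_univ, true_and, and_true] at hxy ⊢
          exact hxy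
        · apply measure_union_null <;> rw [Measure.prod_prod] <;>
            simp [hμIio, hνIio]
      rw [← measure_inter_conull hS, ← Measure.prod_prod]
      apply measure_mono
      rintro ⟨x, y⟩ ⟨hxy, hx, hy⟩
      simp only [Metric.mem_ball, Real.dist_eq, Set.mem_preimage, Set.mem_Ici,
        Set.mem_prod] at *
      have h1 := le_abs_self (x + y - (x₀ + y₀))
      have h2 := abs_lt.mp hxy
      constructor <;> rw [abs_lt] <;> constructor <;> linarith
  -- toReal versions
  set f : ℝ → ℝ := fun ε => (μ (Metric.ball x₀ ε)).toReal with hf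
  set g : ℝ → ℝ := fun ε => (ν (Metric.ball y₀ ε)).toReal with hg
  set H : ℝ → ℝ := fun ε => ((mconv μ ν (Metric.ball (x₀ + y₀) ε)).toReal) with hH
  have hconvfin : ∀ ε : ℝ, mconv μ ν (Metric.ball (x₀ + y₀) ε) ≠ ⊤ := by
    intro ε
    rw [hconv _ measurableSet_ball]
    exact measure_ne_top _ _
  have keyR : ∀ ε : ℝ, 0 < ε → f (ε/2) * g (ε/2) ≤ H ε ∧ H ε ≤ f ε * g ε := by
    intro ε hε
    obtain ⟨k1, k2⟩ := key ε hε
    constructor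
    · rw [hf, hg, hH, ← ENNReal.toReal_mul]
      exact ENNReal.toReal_mono (hconvfin ε) k1
    · rw [hf, hg, hH, ← ENNReal.toReal_mul]
      exact ENNReal.toReal_mono (ENNReal.mul_ne_top (measure_ne_top _ _) (measure_ne_top _ _)) k2
  have hfpos : ∀ ε : ℝ, 0 < ε → 0 < f ε :=
    fun ε hε => ENNReal.toReal_pos (hμmem ε hε).ne' (measure_ne_top _ _)
  have hgpos : ∀ ε : ℝ, 0 < ε → 0 < g ε :=
    fun ε hε => ENNReal.toReal_pos (hνmem ε hε).ne' (measure_ne_top _ _)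
  have hHpos : ∀ ε : ℝ, 0 < ε → 0 < H ε := fun ε hε =>
    lt_of_lt_of_le (mul_pos (hfpos _ (half_pos hε)) (hgpos _ (half_pos hε))) (keyR ε hε).1
  -- limit of lower bound
  have hL : Tendsto (fun ε : ℝ => (Real.log (f ε) + Real.log (g ε)) / Real.log ε)
      (𝓝[>] 0) (𝓝 (d₁ + d₂)) := (hμ.add hν).congr (fun ε => (add_div _ _ _).symm)
  -- ε/2 tends to 0 within Ioi
  have h2 : Tendsto (fun ε : ℝ => ε / 2) (𝓝[>] (0:ℝ)) (𝓝[>] 0) := by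
    apply tendsto_nhdsWithin_of_tendsto_nhds_of_eventually_within
    · have : Tendsto (fun ε : ℝ => ε / 2) (𝓝 (0:ℝ)) (𝓝 ((0:ℝ)/2)) :=
        (continuous_id.div_const 2).tendsto 0
      rw [zero_div] at this
      exact this.mono_left nhdsWithin_le_nhds
    · filter_upwards [self_mem_nhdsWithin] with ε hε
      exact half_pos (Set.mem_Ioi.mp hε)
  have hlogat : Tendsto Real.log (𝓝[>] (0:ℝ)) atBot := Real.tendsto_log_nhdsGT_zero
  have hneg : Tendsto (fun ε : ℝ => -Real.log ε) (𝓝[>] (0:ℝ)) atTop :=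
    tendsto_neg_atTop_iff.mpr hlogat
  have hzero : Tendsto (fun ε : ℝ => Real.log 2 / Real.log ε) (𝓝[>] (0:ℝ)) (𝓝 0) := by
    have h' := (Tendsto.const_div_atTop hneg (Real.log 2)).neg
    rw [neg_zero] at h'
    refine h'.congr fun ε => ?_
    rw [div_neg, neg_neg]
  have hIoo : Set.Ioo (0:ℝ) 1 ∈ 𝓝[>] (0:ℝ) := Ioo_mem_nhdsGT_of_mem ⟨le_refl 0, zero_lt_one⟩
  have hratio : Tendsto (fun ε : ℝ => Real.log (ε/2) / Real.log ε) (𝓝[>] (0:ℝ)) (𝓝 1) := by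
    have h1 : Tendsto (fun ε : ℝ => 1 - Real.log 2 / Real.log ε) (𝓝[>] (0:ℝ)) (𝓝 1) := by
      simpa using tendsto_const_nhds.sub hzero
    apply h1.congr'
    filter_upwards [hIoo] with ε hε
    have hlogne : Real.log ε ≠ 0 := (Real.log_neg hε.1 hε.2).ne
    rw [Real.log_div hε.1.ne' two_ne_zero, sub_div, div_self hlogne]
  -- limit of upper bound
  have hU : Tendsto (fun ε : ℝ => (Real.log (f (ε/2)) + Real.log (g (ε/2))) / Real.log ε)
      (𝓝[>] 0) (𝓝 (d₁ + d₂)) := by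
    have hT := (((hμ.comp h2).add (hν.comp h2)).mul hratio)
    rw [mul_one] at hT
    apply hT.congr'
    filter_upwards [hIoo] with ε hε
    obtain ⟨hε1, hε2⟩ := hε
    have hc : Real.log (ε/2) ≠ 0 := (Real.log_neg (half_pos hε1) (by linarith)).ne
    simp only [Function.comp]
    field_simp
    rfl
  -- squeeze
  refine tendsto_of_tendsto_of_tendsto_of_le_of_le' hL hU ?_ ?_
  · filter_upwards [hIoo] with ε hε
    have hlog : Real.log ε ≤ 0 := (Real.log_neg hε.1 hε.2).le
    apply div_le_div_of_nonpos_of_le hlog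
    rw [← Real.log_mul (hfpos ε hε.1).ne' (hgpos ε hε.1).ne']
    exact (Real.log_le_log_iff (hHpos ε hε.1)
      (mul_pos (hfpos ε hε.1) (hgpos ε hε.1))).mpr (keyR ε hε.1).2
  · filter_upwards [hIoo] with ε hε
    have hlog : Real.log ε ≤ 0 := (Real.log_neg hε.1 hε.2).le
    apply div_le_div_of_nonpos_of_le hlog
    rw [← Real.log_mul (hfpos _ (half_pos hε.1)).ne' (hgpos _ (half_pos hε.1)).ne']
    exact (Real.log_le_log_iff
      (mul_pos (hfpos _ (half_pos hε.1)) (hgpos _ (half_pos hε.1)))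
      (hHpos ε hε.1)).mpr (keyR ε hε.1).1
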